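/- Let K ≥ 1 and let X, Y_1, …, Y_K be independent real-valued random variables, where X is exponentially distributed with rate a > 0 and each Y_i is exponentially distributed with rate b_i > 0, the rates b_1, …, b_K being pairwise distinct. Then for every r ≥ 0, ℙ[X / (Y_1 + ⋯ + Y_K) ≤ r] = Σ_{i=1}^{K} A_i · (a r) / (a r + b_i) = 1 − ∏_{i=1}^{K} b_i / (b_i + a r), where A_i = ∏_{l ≠ i} b_l / (b_l − b_i). -/

import Mathlib

/-!
Conditioning on `S = Y₁ + ⋯ + Y_K`, the independent exponential `X` satisfies
`ℙ[X ≤ r S | S] = 1 - exp (-a r S)`, so `ℙ[X / S ≤ r] = 1 - 𝔼[exp (-a r S)]`, and by independence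
the moment generating function of `S` factors as `∏ i, b i / (b i + a r)`.
The partial-fraction form follows from the Lagrange interpolation identity
`∑ i, ∏_{l ≠ i} (x + b l) / (b l - b i) = 1` at the nodes `-b i`.
-/

open MeasureTheory ProbabilityTheory Finset Real

section PartialFractions

variable {ι F : Type*} [Fintype ι] [DecidableEq ι] [Field F] {b : ι → F}

def partialFractionCoeff (b : ι → F) (i : ι) : F :=
  ∏ l ∈ univ.erase i, b l / (b l - b i)

theorem sum_prod_erase_add_div_sub_eq_one [Nonempty ι] (hb : Function.Injective b) (x : F) :
    ∑ i, ∏ l ∈ univ.erase i, (x + b l) / (b l - b i) = 1 := by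
  have hbasis := congrArg (Polynomial.eval x)
    (Lagrange.sum_basis (v := fun i => -b i) (s := univ)
      (fun i _ j _ h => hb (neg_injective h)) univ_nonempty)
  rw [Polynomial.eval_finsetSum, Polynomial.eval_one] at hbasis
  rw [← hbasis]
  refine sum_congr rfl fun i _ => ?_
  rw [Lagrange.basis, Polynomial.eval_prod]
  refine prod_congr rfl fun l _ => ?_
  simp only [Lagrange.basisDivisor, Polynomial.eval_mul, Polynomial.eval_C, Polynomial.eval_sub,
    Polynomial.eval_X]
  rw [div_eq_inv_mul]
  ring

theorem sum_partialFractionCoeff [Nonempty ι] (hb : Function.Injective b) :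
    ∑ i, partialFractionCoeff b i = 1 := by
  simpa [partialFractionCoeff] using sum_prod_erase_add_div_sub_eq_one hb 0

theorem sum_partialFractionCoeff_mul_div_add [Nonempty ι] (hb : Function.Injective b) {x : F}
    (hx : ∀ i, b i + x ≠ 0) :
    ∑ i, partialFractionCoeff b i * (b i / (b i + x)) = ∏ i, b i / (b i + x) := by
  have hterm : ∀ i, partialFractionCoeff b i * (b i / (b i + x)) =
      (∏ l ∈ univ.erase i, (x + b l) / (b l - b i)) * ∏ l, b l / (b l + x) := by
    intro i
    rw [← mul_prod_erase _ _ (mem_univ i), mul_left_comm, ← prod_mul_distrib,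
      partialFractionCoeff, mul_comm]
    congr 1
    refine prod_congr rfl fun l _ => ?_
    rw [add_comm x, div_mul_div_comm, mul_comm (b l + x), mul_div_mul_right _ _ (hx l)]
  rw [sum_congr rfl fun i _ => hterm i, ← sum_mul, sum_prod_erase_add_div_sub_eq_one hb, one_mul]

theorem sum_partialFractionCoeff_mul_div_add_eq_one_sub_prod [Nonempty ι]
    (hb : Function.Injective b) {x : F} (hx : ∀ i, b i + x ≠ 0) :
    ∑ i, partialFractionCoeff b i * x / (x + b i) = 1 - ∏ i, b i / (b i + x) := by
  have hterm : ∀ i, partialFractionCoeff b i * x / (x + b i) =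
      partialFractionCoeff b i - partialFractionCoeff b i * (b i / (b i + x)) := by
    intro i
    rw [add_comm x]
    field_simp [hx i]
    ring
  rw [sum_congr rfl fun i _ => hterm i, sum_sub_distrib, sum_partialFractionCoeff hb,
    sum_partialFractionCoeff_mul_div_add hb hx]

end PartialFractions

section Exponential

variable {c t : ℝ}

theorem expMeasure_Iic (hc : 0 < c) {x : ℝ} (hx : 0 ≤ x) :
    expMeasure c (Set.Iic x) = ENNReal.ofReal (1 - exp (-(c * x))) := by
  have := isProbabilityMeasure_expMeasure hc
  rw [← ofReal_cdf, cdf_expMeasure_eq hc, if_pos hx]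

theorem ae_pos_expMeasure (hc : 0 < c) : ∀ᵐ x ∂expMeasure c, 0 < x := by
  have hnonpos : expMeasure c (Set.Iic 0) = 0 := by simpa using expMeasure_Iic hc le_rfl
  rw [ae_iff]
  simp only [not_lt]
  exact hnonpos

theorem mgf_id_expMeasure (hc : 0 < c) (ht : t < c) : mgf id (expMeasure c) t = c / (c - t) := by
  have hdensity : ∀ x, (exponentialPDF c x).toReal * exp (t * x) =
      (Set.Ici 0).indicator (fun x => c * exp ((t - c) * x)) x := by
    intro x
    rw [exponentialPDF_eq, ENNReal.toReal_ofReal (by split_ifs <;> positivity)]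
    by_cases hx : 0 ≤ x
    · rw [if_pos hx, Set.indicator_of_mem (Set.mem_Ici.mpr hx), mul_assoc, ← exp_add]
      ring_nf
    · rw [if_neg hx, Set.indicator_of_notMem (by simpa using hx), zero_mul]
  calc mgf id (expMeasure c) t
      = ∫ x, (exponentialPDF c x).toReal * exp (t * x) :=
        integral_withDensity_eq_integral_toReal_smul
          (measurable_exponentialPDFReal c).ennreal_ofReal
          (ae_of_all _ fun _ => ENNReal.ofReal_lt_top) _
    _ = c * ∫ x in Set.Ioi 0, exp ((t - c) * x) := by
        simp_rw [hdensity]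
        rw [integral_indicator measurableSet_Ici, integral_Ici_eq_integral_Ioi,
          integral_const_mul]
    _ = c / (c - t) := by
        rw [integral_exp_mul_Ioi (by linarith), mul_zero, exp_zero, ← neg_sub c t, div_neg, neg_div, neg_neg, mul_one_div]

end Exponential

section Independence

variable {Ω : Type*} [MeasurableSpace Ω] {μ : Measure Ω}

theorem ae_pos_of_map_eq_expMeasure {Z : Ω → ℝ} {c : ℝ} (hZ : AEMeasurable Z μ) (hc : 0 < c)
    (h : μ.map Z = expMeasure c) : ∀ᵐ ω ∂μ, 0 < Z ω :=
  ae_of_ae_map hZ (h ▸ ae_pos_expMeasure hc)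

theorem mgf_of_map_eq_expMeasure {Z : Ω → ℝ} {c t : ℝ} (hZ : AEMeasurable Z μ) (hc : 0 < c)
    (ht : t < c) (h : μ.map Z = expMeasure c) : mgf Z μ t = c / (c - t) := by
  rw [← mgf_id_map hZ, h, mgf_id_expMeasure hc ht]

theorem measure_le_eq_lintegral_of_indepFun [IsFiniteMeasure μ] {X S : Ω → ℝ} (hX : Measurable X)
    (hS : Measurable S) (h : IndepFun X S μ) :
    μ {ω | X ω ≤ S ω} = ∫⁻ ω, μ.map X (Set.Iic (S ω)) ∂μ := by
  have hT : MeasurableSet {p : ℝ × ℝ | p.1 ≤ p.2} := measurableSet_le measurable_fst measurable_snd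
  have hcdf : Measurable fun s => μ.map X (Set.Iic s) :=
    Monotone.measurable fun _ _ hst => measure_mono (Set.Iic_subset_Iic.mpr hst)
  calc μ {ω | X ω ≤ S ω}
      = μ.map (fun ω => (X ω, S ω)) {p | p.1 ≤ p.2} := (Measure.map_apply (hX.prodMk hS) hT).symm
    _ = ((μ.map X).prod (μ.map S)) {p | p.1 ≤ p.2} := by
        rw [(indepFun_iff_map_prod_eq_prod_map_map hX.aemeasurable hS.aemeasurable).mp h]
    _ = ∫⁻ s, μ.map X (Set.Iic s) ∂(μ.map S) := Measure.prod_apply_symm hT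
    _ = ∫⁻ ω, μ.map X (Set.Iic (S ω)) ∂μ := lintegral_map hcdf hS

theorem integrable_exp_mul_of_nonpos [IsFiniteMeasure μ] {S : Ω → ℝ} {t : ℝ} (hS : Measurable S)
    (hS0 : ∀ᵐ ω ∂μ, 0 ≤ S ω) (ht : t ≤ 0) : Integrable (fun ω => exp (t * S ω)) μ := by
  refine Integrable.of_bound (by fun_prop) 1 ?_
  filter_upwards [hS0] with ω hω
  rw [norm_of_nonneg (exp_pos _).le, exp_le_one_iff]
  exact mul_nonpos_of_nonpos_of_nonneg ht hω

theorem measure_div_le_eq_one_sub_mgf [IsProbabilityMeasure μ] {X S : Ω → ℝ} {a r : ℝ}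
    (ha : 0 < a) (hX : Measurable X) (hS : Measurable S) (h : IndepFun X S μ)
    (hXdist : μ.map X = expMeasure a) (hS0 : ∀ᵐ ω ∂μ, 0 < S ω) (hr : 0 ≤ r) :
    μ {ω | X ω / S ω ≤ r} = ENNReal.ofReal (1 - mgf S μ (-(a * r))) := by
  have hsets : {ω | X ω / S ω ≤ r} =ᵐ[μ] {ω | X ω ≤ r * S ω} := by
    filter_upwards [hS0] with ω hω
    change (X ω / S ω ≤ r) = (X ω ≤ r * S ω)
    rw [div_le_iff₀ hω, mul_comm]
  have ht : -(a * r) ≤ 0 := neg_nonpos.mpr (by positivity)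
  have hint := integrable_exp_mul_of_nonpos (μ := μ) hS (hS0.mono fun _ => le_of_lt) ht
  calc μ {ω | X ω / S ω ≤ r}
      = ∫⁻ ω, expMeasure a (Set.Iic (r * S ω)) ∂μ := by
        rw [measure_congr hsets, measure_le_eq_lintegral_of_indepFun hX (hS.const_mul r)
          (h.comp measurable_id (measurable_const_mul r)), hXdist]
    _ = ∫⁻ ω, ENNReal.ofReal (1 - exp (-(a * r) * S ω)) ∂μ := by
        refine lintegral_congr_ae ?_
        filter_upwards [hS0] with ω hω
        rw [expMeasure_Iic ha (by positivity), neg_mul, mul_assoc]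
    _ = ENNReal.ofReal (∫ ω, 1 - exp (-(a * r) * S ω) ∂μ) := by
        refine (ofReal_integral_eq_lintegral_ofReal ((integrable_const 1).sub hint) ?_).symm
        filter_upwards [hS0] with ω hω
        exact sub_nonneg.mpr (exp_le_one_iff.mpr (mul_nonpos_of_nonpos_of_nonneg ht hω.le))
    _ = ENNReal.ofReal (1 - mgf S μ (-(a * r))) := by
        rw [integral_sub (integrable_const 1) hint, integral_const, probReal_univ, one_smul]
        rfl

end Independence

section FinCons

variable {Ω : Type*} [MeasurableSpace Ω] {μ : Measure Ω} {K : ℕ} {X : Ω → ℝ} {Y : Fin K → Ω → ℝ}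

theorem iIndepFun.tail_of_cons (h : iIndepFun (Fin.cons X Y : Fin (K + 1) → Ω → ℝ) μ) :
    iIndepFun Y μ :=
  h.precomp (g := Fin.succ) (Fin.succ_injective K)

theorem iIndepFun.indepFun_sum_of_cons (h : iIndepFun (Fin.cons X Y : Fin (K + 1) → Ω → ℝ) μ)
    (hX : Measurable X) (hY : ∀ i, Measurable (Y i)) :
    IndepFun X (∑ i, Y i) μ := by
  have hmeas : ∀ j, Measurable ((Fin.cons X Y : Fin (K + 1) → Ω → ℝ) j) :=
    Fin.cases hX hY
  have := h.indepFun_finsetSum_of_notMem hmeas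
    (s := univ.map (Fin.succEmb K)) (i := 0) (by simp [Fin.succ_ne_zero])
  simpa [sum_map] using this.symm

end FinCons

/-- Closed-form outage probability in the interference-limited regime (equation (7) of
the paper): if `X ~ Exp(a)` and `Y i ~ Exp(b i)` are independent with pairwise distinct
positive rates, then for every `r ≥ 0`,
`ℙ[X / (Y 1 + ⋯ + Y K) ≤ r] = ∑ i, A i * (a r) / (a r + b i) = 1 - ∏ i, b i / (b i + a r)`,
where `A i = ∏_{l ≠ i} b l / (b l - b i)`. -/
theorem stmt_10 {Ω : Type*} [MeasurableSpace Ω] (μ : Measure Ω) [IsProbabilityMeasure μ]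
    (K : ℕ) (hK : 1 ≤ K) (a : ℝ) (ha : 0 < a) (b : Fin K → ℝ)
    (hpos : ∀ i, 0 < b i) (hdist : Function.Injective b)
    (X : Ω → ℝ) (hXmeas : Measurable X)
    (Y : Fin K → Ω → ℝ) (hYmeas : ∀ i, Measurable (Y i))
    (hindep : iIndepFun (Fin.cons X Y : Fin (K + 1) → Ω → ℝ) μ)
    (hXdist : Measure.map X μ = expMeasure a)
    (hYdist : ∀ i, Measure.map (Y i) μ = expMeasure (b i))
    (r : ℝ) (hr : 0 ≤ r) :
    μ {ω | X ω / (∑ i : Fin K, Y i ω) ≤ r} =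
        ENNReal.ofReal (∑ i : Fin K,
          (∏ l ∈ Finset.univ.erase i, b l / (b l - b i)) * (a * r) / (a * r + b i)) ∧
      ∑ i : Fin K,
          (∏ l ∈ Finset.univ.erase i, b l / (b l - b i)) * (a * r) / (a * r + b i) =
        1 - ∏ i : Fin K, b i / (b i + a * r) := by
  have : Nonempty (Fin K) := Fin.pos_iff_nonempty.mp hK
  have hfrac := sum_partialFractionCoeff_mul_div_add_eq_one_sub_prod hdist
    (x := a * r) fun i => (add_pos_of_pos_of_nonneg (hpos i) (by positivity)).ne'
  refine ⟨?_, hfrac⟩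
  have hS : Measurable (∑ i, Y i) := by fun_prop
  have hS0 : ∀ᵐ ω ∂μ, 0 < (∑ i, Y i) ω := by
    filter_upwards [ae_all_iff.mpr fun i =>
      ae_pos_of_map_eq_expMeasure (hYmeas i).aemeasurable (hpos i) (hYdist i)] with ω hω
    simpa only [Finset.sum_apply] using sum_pos (fun i _ => hω i) univ_nonempty
  have hmgf : mgf (∑ i, Y i) μ (-(a * r)) = ∏ i, b i / (b i + a * r) := by
    rw [(iIndepFun.tail_of_cons hindep).mgf_sum hYmeas]
    refine prod_congr rfl fun i _ => ?_
    rw [mgf_of_map_eq_expMeasure (hYmeas i).aemeasurable (hpos i)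
      (by linarith [hpos i, mul_nonneg ha.le hr]) (hYdist i), sub_neg_eq_add]
  have hprob := measure_div_le_eq_one_sub_mgf ha hXmeas hS
    (iIndepFun.indepFun_sum_of_cons hindep hXmeas hYmeas) hXdist hS0 hr
  simp only [Finset.sum_apply] at hprob
  rw [hprob, hmgf]
  exact congrArg ENNReal.ofReal hfrac.symm
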